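/- Let 0 < s₁ ≤ s₂ and 0 < α ≤ α₃ := ((1+s₂)log(1+1/s₂) − 1)/((1+s₁)log(1+1/s₁) − 1). Then I₂(q) ≥ I₁(q) for all q ∈ [0,1], where I₁, I₂ are the Poisson mutual information functions with gains α, 1 and dark currents s₁, s₂. -/

import Mathlib

/-!
Write `F s q` for the mutual information with unit gain and dark current `s`, and
`c s = (1 + s) log (1 + 1/s) - 1`, so that `α₃ = c s₂ / c s₁`. Each `F s` vanishes at `q = 0` and
`q = 1`, is nonnegative in between, and has slope `c s > 0` at `q = 0`; hence it suffices to show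
`g = c s₁ * F s₂ - c s₂ * F s₁ ≥ 0` on `[0, 1]`. Now `g 0 = g 1 = g' 0 = 0` and
`g'' q = (c s₂ (q + s₂) - c s₁ (q + s₁)) / ((q + s₁) (q + s₂))`, whose numerator is affine and
nonincreasing because `c` is antitone. So `g` is convex on some `[0, t]`, where it lies above its
horizontal tangent at `0`, and concave on `[t, 1]`, where it lies above its nonnegative chord.
-/

open Real Set

theorem monotoneOn_Icc_of_hasDerivAt {f f' : ℝ → ℝ} {a b : ℝ}
    (hf : ∀ x ∈ Icc a b, HasDerivAt f (f' x) x) (hf' : ∀ x ∈ Ioo a b, 0 ≤ f' x) :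
    MonotoneOn f (Icc a b) :=
  monotoneOn_of_hasDerivWithinAt_nonneg (convex_Icc a b) (HasDerivAt.continuousOn hf)
    (fun x hx ↦ (hf x (interior_subset hx)).hasDerivWithinAt)
    (fun x hx ↦ hf' x (by rwa [← interior_Icc]))

theorem concaveOn_Icc_of_hasDerivAt2 {f f' f'' : ℝ → ℝ} {a b : ℝ}
    (hf : ∀ x ∈ Icc a b, HasDerivAt f (f' x) x) (hf' : ∀ x ∈ Icc a b, HasDerivAt f' (f'' x) x)
    (hf'' : ∀ x ∈ Ioo a b, f'' x ≤ 0) : ConcaveOn ℝ (Icc a b) f :=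
  concaveOn_of_hasDerivWithinAt2_nonpos (convex_Icc a b) (HasDerivAt.continuousOn hf)
    (fun x hx ↦ (hf x (interior_subset hx)).hasDerivWithinAt)
    (fun x hx ↦ (hf' x (interior_subset hx)).hasDerivWithinAt)
    (fun x hx ↦ hf'' x (by rwa [← interior_Icc]))

theorem nonneg_of_hasDerivAt2_nonneg_of_nonpos {g g' g'' : ℝ → ℝ} {a t b : ℝ}
    (hat : a ≤ t) (htb : t ≤ b)
    (hg : ∀ x ∈ Icc a b, HasDerivAt g (g' x) x) (hg' : ∀ x ∈ Icc a b, HasDerivAt g' (g'' x) x)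
    (hconvex : ∀ x ∈ Ioo a t, 0 ≤ g'' x) (hconcave : ∀ x ∈ Ioo t b, g'' x ≤ 0)
    (ha : g a = 0) (ha' : g' a = 0) (hb : 0 ≤ g b) :
    ∀ x ∈ Icc a b, 0 ≤ g x := by
  have hleft : Icc a t ⊆ Icc a b := Icc_subset_Icc_right htb
  have hright : Icc t b ⊆ Icc a b := Icc_subset_Icc_left hat
  have hg'_mono : MonotoneOn g' (Icc a t) :=
    monotoneOn_Icc_of_hasDerivAt (fun x hx ↦ hg' x (hleft hx)) hconvex
  have hg_mono : MonotoneOn g (Icc a t) :=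
    monotoneOn_Icc_of_hasDerivAt (fun x hx ↦ hg x (hleft hx)) fun x hx ↦
      ha' ▸ hg'_mono (left_mem_Icc.2 hat) (Ioo_subset_Icc_self hx) hx.1.le
  have hg_left : ∀ x ∈ Icc a t, 0 ≤ g x := fun x hx ↦
    ha ▸ hg_mono (left_mem_Icc.2 hat) hx hx.1
  have hg_concave : ConcaveOn ℝ (Icc t b) g :=
    concaveOn_Icc_of_hasDerivAt2 (fun x hx ↦ hg x (hright hx)) (fun x hx ↦ hg' x (hright hx))
      hconcave
  intro x hx
  rcases le_total x t with hxt | htx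
  · exact hg_left x ⟨hx.1, hxt⟩
  · exact (le_min (hg_left t (right_mem_Icc.2 hat)) hb).trans <|
      hg_concave.min_le_of_mem_Icc (left_mem_Icc.2 htb) (right_mem_Icc.2 htb) ⟨htx, hx.2⟩

theorem AntitoneOn.exists_nonneg_Ico_nonpos_Ioc {ψ : ℝ → ℝ} {a b : ℝ} (hab : a ≤ b)
    (hψ : AntitoneOn ψ (Icc a b)) (hcont : ContinuousOn ψ (Icc a b)) :
    ∃ t ∈ Icc a b, (∀ x ∈ Ico a t, 0 ≤ ψ x) ∧ ∀ x ∈ Ioc t b, ψ x ≤ 0 := by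
  have ha := left_mem_Icc.2 hab
  have hb := right_mem_Icc.2 hab
  by_cases hψb : 0 ≤ ψ b
  · refine ⟨b, hb, fun x hx ↦ hψb.trans (hψ (Ico_subset_Icc_self hx) hb hx.2.le), ?_⟩
    simp
  by_cases hψa : ψ a ≤ 0
  · refine ⟨a, ha, by simp, fun x hx ↦ (hψ ha (Ioc_subset_Icc_self hx) hx.1.le).trans hψa⟩
  obtain ⟨t, ht, hψt⟩ : (0 : ℝ) ∈ ψ '' Icc a b :=
    intermediate_value_Icc' hab hcont ⟨(not_le.1 hψb).le, (not_le.1 hψa).le⟩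
  refine ⟨t, ht, fun x hx ↦ ?_, fun x hx ↦ ?_⟩
  · exact hψt ▸ hψ ⟨hx.1, hx.2.le.trans ht.2⟩ ht hx.2.le
  · exact hψt ▸ hψ ht ⟨ht.1.trans hx.1.le, hx.2⟩ hx.1.le

noncomputable def poissonInfo (s q : ℝ) : ℝ :=
  -(q + s) * log (q + s) + q * (1 + s) * log (1 + s) + (1 - q) * s * log s

noncomputable def poissonInfoDeriv (s q : ℝ) : ℝ :=
  (1 + s) * log (1 + s) - s * log s - 1 - log (q + s)

noncomputable def poissonInfoSlope (s : ℝ) : ℝ := (1 + s) * log (1 + 1 / s) - 1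

theorem poissonInfo_zero (s : ℝ) : poissonInfo s 0 = 0 := by simp [poissonInfo]

theorem poissonInfo_one (s : ℝ) : poissonInfo s 1 = 0 := by unfold poissonInfo; ring

theorem poissonInfo_nonneg {s q : ℝ} (hs : 0 ≤ s) (hq : q ∈ Icc (0 : ℝ) 1) :
    0 ≤ poissonInfo s q := by
  have h := convexOn_mul_log.2 (mem_Ici.2 hs) (mem_Ici.2 (by linarith : (0 : ℝ) ≤ 1 + s))
    (sub_nonneg.2 hq.2) hq.1 (sub_add_cancel 1 q)
  simp only [smul_eq_mul, show (1 - q) * s + q * (1 + s) = q + s by ring] at h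
  unfold poissonInfo
  linarith

theorem hasDerivAt_poissonInfo {s q : ℝ} (hqs : q + s ≠ 0) :
    HasDerivAt (poissonInfo s) (poissonInfoDeriv s q) q := by
  have h := ((hasDerivAt_mul_log hqs).comp_add_const q s).neg.add
    ((hasDerivAt_id q).mul_const ((1 + s) * log (1 + s) - s * log s))
  refine ((h.add_const (s * log s)).congr_deriv ?_).congr_of_eventuallyEq
    (Filter.Eventually.of_forall fun x ↦ ?_)
  · simp only [poissonInfoDeriv]; ring
  · simp only [poissonInfo, Pi.add_apply, Pi.neg_apply, id]; ring

theorem hasDerivAt_poissonInfoDeriv {s q : ℝ} (hqs : q + s ≠ 0) :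
    HasDerivAt (poissonInfoDeriv s) (-(q + s)⁻¹) q :=
  ((hasDerivAt_log hqs).comp_add_const q s).const_sub
    ((1 + s) * log (1 + s) - s * log s - 1)

theorem poissonInfoDeriv_zero {s : ℝ} (hs : 0 < s) :
    poissonInfoDeriv s 0 = poissonInfoSlope s := by
  rw [poissonInfoDeriv, poissonInfoSlope, zero_add, one_add_div hs.ne', add_comm s 1,
    log_div (by positivity) hs.ne']
  ring

theorem poissonInfoSlope_pos {s : ℝ} (hs : 0 < s) : 0 < poissonInfoSlope s := by
  have hs1 : 0 < 1 + s := by linarith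
  have h := log_lt_sub_one_of_pos (x := s / (1 + s)) (by positivity)
    (by rw [ne_eq, div_eq_one_iff_eq hs1.ne']; linarith)
  rw [show s / (1 + s) = (1 + 1 / s)⁻¹ by field_simp; ring, log_inv,
    show (1 + 1 / s)⁻¹ - 1 = -(1 / (1 + s)) by field_simp; ring] at h
  rw [poissonInfoSlope, sub_pos]
  calc 1 = (1 + s) * (1 / (1 + s)) := by field_simp
    _ < (1 + s) * log (1 + 1 / s) := by gcongr; linarith

theorem hasDerivAt_poissonInfoSlope {s : ℝ} (hs : 0 < s) :
    HasDerivAt poissonInfoSlope (log (1 + 1 / s) - 1 / s) s := by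
  have h1 : HasDerivAt (fun x : ℝ ↦ 1 + 1 / x) (-(s ^ 2)⁻¹) s := by
    simpa [one_div] using (hasDerivAt_inv hs.ne').const_add 1
  have h := (((hasDerivAt_id s).const_add 1).mul
    ((hasDerivAt_log (by positivity)).comp s h1)).sub_const 1
  refine h.congr_deriv ?_
  simp only [Function.comp, id]
  field_simp
  ring

theorem poissonInfoSlope_antitoneOn : AntitoneOn poissonInfoSlope (Ioi 0) := by
  refine antitoneOn_of_hasDerivWithinAt_nonpos (convex_Ioi 0)
    (HasDerivAt.continuousOn fun x hx ↦ hasDerivAt_poissonInfoSlope hx)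
    (fun x hx ↦ (hasDerivAt_poissonInfoSlope (interior_subset hx)).hasDerivWithinAt) fun x hx ↦ ?_
  rw [interior_Ioi, mem_Ioi] at hx
  have := log_le_sub_one_of_pos (x := 1 + 1 / x) (by positivity)
  linarith

theorem poissonInfoSlope_mul_poissonInfo_le {s₁ s₂ q : ℝ} (h1 : 0 < s₁) (h12 : s₁ ≤ s₂)
    (hq : q ∈ Icc (0 : ℝ) 1) :
    poissonInfoSlope s₂ * poissonInfo s₁ q ≤ poissonInfoSlope s₁ * poissonInfo s₂ q := by
  have h2 : 0 < s₂ := h1.trans_le h12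
  set c₁ := poissonInfoSlope s₁
  set c₂ := poissonInfoSlope s₂
  have hc : c₂ ≤ c₁ := poissonInfoSlope_antitoneOn h1 h2 h12
  have hpos {x s : ℝ} (hs : 0 < s) (hx : x ∈ Icc (0 : ℝ) 1) : 0 < x + s := by linarith [hx.1]
  set ψ : ℝ → ℝ := fun x ↦ c₂ * (x + s₂) - c₁ * (x + s₁)
  have hψ : AntitoneOn ψ (Icc 0 1) := fun x _ y _ hxy ↦ by simp only [ψ]; nlinarith
  obtain ⟨t, ht, hψ_nonneg, hψ_nonpos⟩ :=
    hψ.exists_nonneg_Ico_nonpos_Ioc zero_le_one (by fun_prop : Continuous ψ).continuousOn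
  have hg'' : ∀ x ∈ Icc (0 : ℝ) 1,
      c₁ * -(x + s₂)⁻¹ - c₂ * -(x + s₁)⁻¹ = ψ x / ((x + s₁) * (x + s₂)) := fun x hx ↦ by
    have := hpos h1 hx
    have := hpos h2 hx
    field_simp
    ring
  have key := nonneg_of_hasDerivAt2_nonneg_of_nonpos ht.1 ht.2
    (g := fun x ↦ c₁ * poissonInfo s₂ x - c₂ * poissonInfo s₁ x)
    (g' := fun x ↦ c₁ * poissonInfoDeriv s₂ x - c₂ * poissonInfoDeriv s₁ x)
    (fun x hx ↦ ((hasDerivAt_poissonInfo (hpos h2 hx).ne').const_mul c₁).sub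
      ((hasDerivAt_poissonInfo (hpos h1 hx).ne').const_mul c₂))
    (fun x hx ↦ ((hasDerivAt_poissonInfoDeriv (hpos h2 hx).ne').const_mul c₁).sub
      ((hasDerivAt_poissonInfoDeriv (hpos h1 hx).ne').const_mul c₂))
    (fun x hx ↦ by
      have hx' : x ∈ Icc (0 : ℝ) 1 := ⟨hx.1.le, hx.2.le.trans ht.2⟩
      rw [hg'' x hx']
      exact div_nonneg (hψ_nonneg x (Ioo_subset_Ico_self hx))
        (mul_pos (hpos h1 hx') (hpos h2 hx')).le)
    (fun x hx ↦ by
      have hx' : x ∈ Icc (0 : ℝ) 1 := ⟨ht.1.trans hx.1.le, hx.2.le⟩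
      rw [hg'' x hx']
      exact div_nonpos_of_nonpos_of_nonneg (hψ_nonpos x (Ioo_subset_Ioc_self hx))
        (mul_pos (hpos h1 hx') (hpos h2 hx')).le)
    (by simp [poissonInfo_zero])
    (by simp [poissonInfoDeriv_zero h1, poissonInfoDeriv_zero h2]; ring)
    (by simp [poissonInfo_one]) q hq
  linarith [key]

theorem more_capable'_general (s₁ s₂ α : ℝ) (h1 : 0 < s₁) (h12 : s₁ ≤ s₂)
    (hα : α ≤ ((1 + s₂) * Real.log (1 + 1 / s₂) - 1) / ((1 + s₁) * Real.log (1 + 1 / s₁) - 1)) :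
    ∀ q ∈ Icc (0:ℝ) 1,
      α * (-(q + s₁) * Real.log (q + s₁) + q * (1 + s₁) * Real.log (1 + s₁)
        + (1 - q) * s₁ * Real.log s₁) ≤
      (-(q + s₂) * Real.log (q + s₂) + q * (1 + s₂) * Real.log (1 + s₂)
        + (1 - q) * s₂ * Real.log s₂) := by
  intro q hq
  calc α * poissonInfo s₁ q
      ≤ poissonInfoSlope s₂ / poissonInfoSlope s₁ * poissonInfo s₁ q :=
        mul_le_mul_of_nonneg_right hα (poissonInfo_nonneg h1.le hq)
    _ ≤ poissonInfo s₂ q := by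
        rw [div_mul_eq_mul_div, div_le_iff₀ (poissonInfoSlope_pos h1), mul_comm (poissonInfo s₂ q)]
        exact poissonInfoSlope_mul_poissonInfo_le h1 h12 hq

theorem more_capable' (s₁ s₂ α : ℝ) (h1 : 0 < s₁) (h12 : s₁ ≤ s₂) (hα0 : 0 < α)
    (hα : α ≤ ((1 + s₂) * Real.log (1 + 1 / s₂) - 1) / ((1 + s₁) * Real.log (1 + 1 / s₁) - 1)) :
    ∀ q ∈ Icc (0:ℝ) 1,
      α * (-(q + s₁) * Real.log (q + s₁) + q * (1 + s₁) * Real.log (1 + s₁)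
        + (1 - q) * s₁ * Real.log s₁) ≤
      (-(q + s₂) * Real.log (q + s₂) + q * (1 + s₂) * Real.log (1 + s₂)
        + (1 - q) * s₂ * Real.log s₂) :=
  more_capable'_general s₁ s₂ α h1 h12 hα
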